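/- Suppose the Population EM and Sample-based EM iterates for Model 2 are started from the same initial parameters: μ̂1^0 = μ1^0 and μ̂2^0 = μ2^0. Then for each fixed iteration t ≥ 0, the Sample-based EM iterates converge in probability to the Population EM iterates as the sample size grows: for every ε > 0, P(‖μ̂1^t − μ1^t‖ > ε) → 0 and P(‖μ̂2^t − μ2^t‖ > ε) → 0 as n → ∞. -/

import Mathlib

open MeasureTheory ProbabilityTheory Real Filter InnerProductGeometry RealInnerProductSpace

/-- Standard Gaussian density on `ℝ^d` (identity covariance, mean zero). -/
noncomputable def gpdf (d : ℕ) (x : EuclideanSpace ℝ (Fin d)) : ℝ :=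
  (2 * π) ^ (-(d : ℝ) / 2) * Real.exp (-‖x‖ ^ 2 / 2)

/-- `v_d(y, μ1, μ2) = φ_d(y − μ1)/(φ_d(y − μ1) + φ_d(y − μ2))`. -/
noncomputable def v2 (d : ℕ) (y μ1 μ2 : EuclideanSpace ℝ (Fin d)) : ℝ :=
  gpdf d (y - μ1) / (gpdf d (y - μ1) + gpdf d (y - μ2))

/-- The density of the mixture `0.5 N(μ1*, I_d) + 0.5 N(μ2*, I_d)`. -/
noncomputable def mix2 (d : ℕ) (μ1s μ2s y : EuclideanSpace ℝ (Fin d)) : ℝ :=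
  (gpdf d (y - μ1s) + gpdf d (y - μ2s)) / 2

/-- Population EM iterates `(μ1^t, μ2^t)` for Model 2. -/
noncomputable def em2 (d : ℕ) (μ1s μ2s μ10 μ20 : EuclideanSpace ℝ (Fin d)) :
    ℕ → EuclideanSpace ℝ (Fin d) × EuclideanSpace ℝ (Fin d)
  | 0 => (μ10, μ20)
  | t + 1 =>
    let p := em2 d μ1s μ2s μ10 μ20 t
    ((∫ y, v2 d y p.1 p.2 * mix2 d μ1s μ2s y)⁻¹ •
        ∫ y, (v2 d y p.1 p.2 * mix2 d μ1s μ2s y) • y,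
     (∫ y, (1 - v2 d y p.1 p.2) * mix2 d μ1s μ2s y)⁻¹ •
        ∫ y, ((1 - v2 d y p.1 p.2) * mix2 d μ1s μ2s y) • y)

/-- Re-parameterized iterate `a^t = (μ1^t + μ2^t)/2 − (μ1* + μ2*)/2`. -/
noncomputable def aIter (d : ℕ) (μ1s μ2s μ10 μ20 : EuclideanSpace ℝ (Fin d)) (t : ℕ) :
    EuclideanSpace ℝ (Fin d) :=
  (2:ℝ)⁻¹ • ((em2 d μ1s μ2s μ10 μ20 t).1 + (em2 d μ1s μ2s μ10 μ20 t).2) -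
    (2:ℝ)⁻¹ • (μ1s + μ2s)

/-- Re-parameterized iterate `b^t = (μ2^t − μ1^t)/2`. -/
noncomputable def bIter (d : ℕ) (μ1s μ2s μ10 μ20 : EuclideanSpace ℝ (Fin d)) (t : ℕ) :
    EuclideanSpace ℝ (Fin d) :=
  (2:ℝ)⁻¹ • ((em2 d μ1s μ2s μ10 μ20 t).2 - (em2 d μ1s μ2s μ10 μ20 t).1)

/-- `θ* = (μ2* − μ1*)/2`. -/
noncomputable def thetaStar (d : ℕ) (μ1s μ2s : EuclideanSpace ℝ (Fin d)) :
    EuclideanSpace ℝ (Fin d) :=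
  (2:ℝ)⁻¹ • (μ2s - μ1s)

/-- Sample-based EM iterates `(μ̂1^t, μ̂2^t)` for Model 2, built from the first `n`
samples `ys 0, …, ys (n−1)`. -/
noncomputable def sem2 (d : ℕ) (ys : ℕ → EuclideanSpace ℝ (Fin d)) (n : ℕ)
    (μ10 μ20 : EuclideanSpace ℝ (Fin d)) :
    ℕ → EuclideanSpace ℝ (Fin d) × EuclideanSpace ℝ (Fin d)
  | 0 => (μ10, μ20)
  | t + 1 =>
    let p := sem2 d ys n μ10 μ20 t
    ((∑ i ∈ Finset.range n, v2 d (ys i) p.1 p.2)⁻¹ •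
        ∑ i ∈ Finset.range n, v2 d (ys i) p.1 p.2 • ys i,
     (∑ i ∈ Finset.range n, (1 - v2 d (ys i) p.1 p.2))⁻¹ •
        ∑ i ∈ Finset.range n, (1 - v2 d (ys i) p.1 p.2) • ys i)

/-! The responsibility `v2 d y a b = sigmoid ((‖y - b‖² - ‖y - a‖²) / 2)` is Lipschitz in the
parameters `(a, b)`, with a constant that grows linearly in `‖y‖`. Hence, once the strong law of
large numbers holds for `v2 (·, a, b) • y`, `v2 (·, a, b)` and `(1 + ‖y‖)²` (all integrable
against the Gaussian mixture), the sample M-step evaluated at any parameters converging to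
`(a, b)` converges to the population M-step at `(a, b)`. Induction on `t` then gives almost sure
convergence of the sample iterates to the population iterates, and almost sure convergence implies
convergence in probability. -/

open Finset

section v2
variable {d : ℕ}

lemma lipschitzWith_one_sigmoid : LipschitzWith 1 sigmoid := by
  refine lipschitzWith_of_nnnorm_deriv_le differentiable_sigmoid fun x => ?_
  rw [← NNReal.coe_le_coe, coe_nnnorm, deriv_sigmoid, Real.norm_eq_abs, NNReal.coe_one,
    abs_of_nonneg (mul_nonneg (sigmoid_nonneg x) (sub_nonneg.2 (sigmoid_le_one x)))]
  nlinarith [sigmoid_nonneg x, sigmoid_le_one x]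

lemma gpdf_pos (x : EuclideanSpace ℝ (Fin d)) : 0 < gpdf d x := by
  unfold gpdf
  positivity

lemma v2_eq_sigmoid (y a b : EuclideanSpace ℝ (Fin d)) :
    v2 d y a b = sigmoid ((‖y - b‖ ^ 2 - ‖y - a‖ ^ 2) / 2) := by
  have hb : gpdf d (y - b) = rexp (-((‖y - b‖ ^ 2 - ‖y - a‖ ^ 2) / 2)) * gpdf d (y - a) := by
    simp only [gpdf]
    rw [mul_left_comm, ← Real.exp_add]
    ring_nf
  have ha := gpdf_pos (y - a)
  rw [v2, sigmoid_def, hb]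
  field_simp

lemma v2_pos (y a b : EuclideanSpace ℝ (Fin d)) : 0 < v2 d y a b := by
  rw [v2_eq_sigmoid]
  exact sigmoid_pos _

lemma v2_le_one (y a b : EuclideanSpace ℝ (Fin d)) : v2 d y a b ≤ 1 := by
  rw [v2_eq_sigmoid]
  exact sigmoid_le_one _

lemma norm_v2_le_one (y a b : EuclideanSpace ℝ (Fin d)) : ‖v2 d y a b‖ ≤ 1 := by
  rw [Real.norm_of_nonneg (v2_pos y a b).le]
  exact v2_le_one y a b

lemma one_sub_v2 (y a b : EuclideanSpace ℝ (Fin d)) : 1 - v2 d y a b = v2 d y b a := by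
  rw [v2_eq_sigmoid, v2_eq_sigmoid, ← sigmoid_neg]
  ring_nf

@[fun_prop]
lemma Measurable.v2 {α : Type*} [MeasurableSpace α] {f g h : α → EuclideanSpace ℝ (Fin d)}
    (hf : Measurable f) (hg : Measurable g) (hh : Measurable h) :
    Measurable fun x => v2 d (f x) (g x) (h x) := by
  simp only [v2_eq_sigmoid]
  exact continuous_sigmoid.measurable.comp (by fun_prop)

lemma abs_norm_sub_sq_sub_norm_sub_sq_le {V : Type*} [SeminormedAddCommGroup V] (y a a' : V) :
    |‖y - a'‖ ^ 2 - ‖y - a‖ ^ 2| ≤ ‖a' - a‖ * (2 * ‖y‖ + ‖a‖ + ‖a'‖) := by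
  have hdiff : |‖y - a'‖ - ‖y - a‖| ≤ ‖a' - a‖ := by
    simpa [norm_sub_rev a] using abs_norm_sub_norm_le (y - a') (y - a)
  have hsum : ‖y - a'‖ + ‖y - a‖ ≤ 2 * ‖y‖ + ‖a‖ + ‖a'‖ := by
    linarith [norm_sub_le y a, norm_sub_le y a']
  rw [sq_sub_sq, abs_mul, abs_of_nonneg (by positivity : 0 ≤ ‖y - a'‖ + ‖y - a‖), mul_comm]
  exact mul_le_mul hdiff hsum (by positivity) (norm_nonneg _)

lemma abs_v2_sub_v2_le (y a b a' b' : EuclideanSpace ℝ (Fin d)) :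
    |v2 d y a' b' - v2 d y a b| ≤
      (‖a' - a‖ + ‖b' - b‖) * (1 + ‖a‖ + ‖a'‖ + ‖b‖ + ‖b'‖) * (1 + ‖y‖) := by
  have ha := abs_norm_sub_sq_sub_norm_sub_sq_le y a a'
  have hb := abs_norm_sub_sq_sub_norm_sub_sq_le y b b'
  have hsig := lipschitzWith_one_sigmoid.dist_le_mul
    ((‖y - b'‖ ^ 2 - ‖y - a'‖ ^ 2) / 2) ((‖y - b‖ ^ 2 - ‖y - a‖ ^ 2) / 2)
  rw [NNReal.coe_one, one_mul, Real.dist_eq, Real.dist_eq] at hsig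
  rw [v2_eq_sigmoid, v2_eq_sigmoid]
  refine hsig.trans ?_
  have hs : |(‖y - b'‖ ^ 2 - ‖y - a'‖ ^ 2) / 2 - (‖y - b‖ ^ 2 - ‖y - a‖ ^ 2) / 2| ≤
      (‖a' - a‖ * (2 * ‖y‖ + ‖a‖ + ‖a'‖) + ‖b' - b‖ * (2 * ‖y‖ + ‖b‖ + ‖b'‖)) / 2 := by
    rw [abs_le] at ha hb ⊢
    constructor <;> linarith
  refine hs.trans ?_
  nlinarith [norm_nonneg y, norm_nonneg a, norm_nonneg a', norm_nonneg b, norm_nonneg b',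
    norm_nonneg (a' - a), norm_nonneg (b' - b), mul_nonneg (norm_nonneg (a' - a)) (norm_nonneg y),
    mul_nonneg (norm_nonneg (b' - b)) (norm_nonneg y)]

end v2

section mixture
variable {d : ℕ}

lemma integrable_exp_neg_mul_sq_norm {V : Type*} [NormedAddCommGroup V] [InnerProductSpace ℝ V]
    [FiniteDimensional ℝ V] [MeasurableSpace V] [BorelSpace V] {b : ℝ} (hb : 0 < b) :
    Integrable fun x : V => rexp (-b * ‖x‖ ^ 2) := by
  have h := (GaussianFourier.integrable_cexp_neg_mul_sq_norm_add (V := V)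
    (b := (b : ℂ)) (by simpa using hb) 0 0).norm
  refine h.congr (Eventually.of_forall fun x => ?_)
  simp [Complex.norm_exp, ← Complex.ofReal_pow]

lemma one_add_sq_mul_exp_neg_sq_le (r : ℝ) :
    (1 + r) ^ 2 * rexp (-r ^ 2 / 2) ≤ 8 * rexp (-4⁻¹ * r ^ 2) := by
  have hpoly : (1 + r) ^ 2 ≤ 8 * rexp (r ^ 2 / 4) := by
    nlinarith [Real.add_one_le_exp (r ^ 2 / 4), sq_nonneg (r - 1)]
  calc (1 + r) ^ 2 * rexp (-r ^ 2 / 2) ≤ 8 * rexp (r ^ 2 / 4) * rexp (-r ^ 2 / 2) :=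
        mul_le_mul_of_nonneg_right hpoly (Real.exp_pos _).le
    _ = 8 * rexp (-4⁻¹ * r ^ 2) := by rw [mul_assoc, ← Real.exp_add]; ring_nf

lemma integrable_one_add_norm_sq_mul_gpdf (μ : EuclideanSpace ℝ (Fin d)) :
    Integrable fun y => (1 + ‖y‖) ^ 2 * gpdf d (y - μ) := by
  suffices h : Integrable fun y => (1 + ‖y + μ‖) ^ 2 * gpdf d y by
    simpa using h.comp_sub_right μ
  have hdom := (integrable_exp_neg_mul_sq_norm (V := EuclideanSpace ℝ (Fin d))
    (b := 4⁻¹) (by norm_num)).const_mul ((1 + ‖μ‖) ^ 2 * (2 * π) ^ (-(d : ℝ) / 2) * 8)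
  refine hdom.mono' (by unfold gpdf; fun_prop) (Eventually.of_forall fun y => ?_)
  have htri : 1 + ‖y + μ‖ ≤ (1 + ‖μ‖) * (1 + ‖y‖) := by
    nlinarith [norm_add_le y μ, mul_nonneg (norm_nonneg y) (norm_nonneg μ)]
  rw [Real.norm_of_nonneg (by have := gpdf_pos (d := d) y; positivity), gpdf]
  calc (1 + ‖y + μ‖) ^ 2 * ((2 * π) ^ (-(d : ℝ) / 2) * rexp (-‖y‖ ^ 2 / 2))
      ≤ ((1 + ‖μ‖) * (1 + ‖y‖)) ^ 2 * ((2 * π) ^ (-(d : ℝ) / 2) * rexp (-‖y‖ ^ 2 / 2)) := by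
        gcongr
    _ = (1 + ‖μ‖) ^ 2 * (2 * π) ^ (-(d : ℝ) / 2) * ((1 + ‖y‖) ^ 2 * rexp (-‖y‖ ^ 2 / 2)) := by
        ring
    _ ≤ _ := by
        rw [mul_assoc _ 8]
        exact mul_le_mul_of_nonneg_left (one_add_sq_mul_exp_neg_sq_le _) (by positivity)

variable (d) in
noncomputable def mixLaw (μ1s μ2s : EuclideanSpace ℝ (Fin d)) :
    Measure (EuclideanSpace ℝ (Fin d)) :=
  volume.withDensity fun y => ENNReal.ofReal (mix2 d μ1s μ2s y)

variable (μ1s μ2s : EuclideanSpace ℝ (Fin d))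

lemma mix2_pos (y : EuclideanSpace ℝ (Fin d)) : 0 < mix2 d μ1s μ2s y := by
  have := gpdf_pos (d := d) (y - μ1s)
  have := gpdf_pos (d := d) (y - μ2s)
  unfold mix2
  positivity

lemma measurable_mix2 : Measurable (mix2 d μ1s μ2s) := by
  unfold mix2 gpdf
  fun_prop

lemma integral_mixLaw {F : Type*} [NormedAddCommGroup F] [NormedSpace ℝ F]
    (h : EuclideanSpace ℝ (Fin d) → F) :
    ∫ y, h y ∂mixLaw d μ1s μ2s = ∫ y, mix2 d μ1s μ2s y • h y := by
  rw [mixLaw, integral_withDensity_eq_integral_toReal_smul (measurable_mix2 μ1s μ2s).ennreal_ofReal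
    (Eventually.of_forall fun _ => ENNReal.ofReal_lt_top)]
  simp_rw [ENNReal.toReal_ofReal (mix2_pos μ1s μ2s _).le]

lemma integrable_mixLaw_iff {F : Type*} [NormedAddCommGroup F] [NormedSpace ℝ F]
    {h : EuclideanSpace ℝ (Fin d) → F} :
    Integrable h (mixLaw d μ1s μ2s) ↔ Integrable fun y => mix2 d μ1s μ2s y • h y := by
  rw [mixLaw, integrable_withDensity_iff_integrable_smul' (measurable_mix2 μ1s μ2s).ennreal_ofReal
    (Eventually.of_forall fun _ => ENNReal.ofReal_lt_top)]
  simp_rw [ENNReal.toReal_ofReal (mix2_pos μ1s μ2s _).le]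

lemma integrable_mixLaw_of_norm_le {F : Type*} [NormedAddCommGroup F] [NormedSpace ℝ F]
    [MeasurableSpace F] [BorelSpace F] [SecondCountableTopology F]
    {h : EuclideanSpace ℝ (Fin d) → F} (hh : Measurable h) (hle : ∀ y, ‖h y‖ ≤ (1 + ‖y‖) ^ 2) :
    Integrable h (mixLaw d μ1s μ2s) := by
  have hdom : Integrable (fun y => (1 + ‖y‖) ^ 2) (mixLaw d μ1s μ2s) := by
    rw [integrable_mixLaw_iff]
    simp_rw [smul_eq_mul, mix2, div_mul_eq_mul_div, add_mul, mul_comm _ ((1 + ‖_‖) ^ 2)]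
    exact ((integrable_one_add_norm_sq_mul_gpdf μ1s).add
      (integrable_one_add_norm_sq_mul_gpdf μ2s)).div_const 2
  exact hdom.mono' hh.aestronglyMeasurable (Eventually.of_forall hle)

end mixture

section mStep
variable {d : ℕ}

lemma tendsto_avg_of_norm_sub_le {F : Type*} [SeminormedAddCommGroup F] [NormedSpace ℝ F]
    {g : ℕ → ℕ → F} {g₀ : ℕ → F} {L w : ℕ → ℝ} {I : F} {m : ℝ}
    (hle : ∀ n i, ‖g n i - g₀ i‖ ≤ L n * w i) (hL : Tendsto L atTop (nhds 0))
    (hw : Tendsto (fun n : ℕ => (n : ℝ)⁻¹ • ∑ i ∈ range n, w i) atTop (nhds m))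
    (hg₀ : Tendsto (fun n : ℕ => (n : ℝ)⁻¹ • ∑ i ∈ range n, g₀ i) atTop (nhds I)) :
    Tendsto (fun n : ℕ => (n : ℝ)⁻¹ • ∑ i ∈ range n, g n i) atTop (nhds I) := by
  have hdiff : Tendsto (fun n : ℕ => (n : ℝ)⁻¹ • ∑ i ∈ range n, (g n i - g₀ i))
      atTop (nhds 0) := by
    refine squeeze_zero_norm (fun n => ?_) (by simpa using hL.mul hw)
    calc ‖(n : ℝ)⁻¹ • ∑ i ∈ range n, (g n i - g₀ i)‖
        ≤ (n : ℝ)⁻¹ * ∑ i ∈ range n, ‖g n i - g₀ i‖ := by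
          rw [norm_smul, norm_inv, RCLike.norm_natCast]
          gcongr
          exact norm_sum_le _ _
      _ ≤ (n : ℝ)⁻¹ * ∑ i ∈ range n, L n * w i := by gcongr with i; exact hle n i
      _ = L n * ((n : ℝ)⁻¹ • ∑ i ∈ range n, w i) := by rw [← mul_sum, smul_eq_mul]; ring
  refine (add_zero I ▸ hg₀.add hdiff).congr fun n => ?_
  rw [← smul_add, ← sum_add_distrib]
  simp

variable (d) in
noncomputable def sampleMStep (ys : ℕ → EuclideanSpace ℝ (Fin d)) (n : ℕ)
    (a b : EuclideanSpace ℝ (Fin d)) : EuclideanSpace ℝ (Fin d) :=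
  (∑ i ∈ range n, v2 d (ys i) a b)⁻¹ • ∑ i ∈ range n, v2 d (ys i) a b • ys i

lemma tendsto_sampleMStep (ys : ℕ → EuclideanSpace ℝ (Fin d))
    {a b : EuclideanSpace ℝ (Fin d)} {q : ℕ → EuclideanSpace ℝ (Fin d) × EuclideanSpace ℝ (Fin d)}
    (hq : Tendsto q atTop (nhds (a, b))) {I : EuclideanSpace ℝ (Fin d)} {c m : ℝ} (hc : c ≠ 0)
    (hI : Tendsto (fun n : ℕ => (n : ℝ)⁻¹ • ∑ i ∈ range n, v2 d (ys i) a b • ys i)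
      atTop (nhds I))
    (hc' : Tendsto (fun n : ℕ => (n : ℝ)⁻¹ • ∑ i ∈ range n, v2 d (ys i) a b) atTop (nhds c))
    (hm : Tendsto (fun n : ℕ => (n : ℝ)⁻¹ • ∑ i ∈ range n, (1 + ‖ys i‖) ^ 2) atTop (nhds m)) :
    Tendsto (fun n => sampleMStep d ys n (q n).1 (q n).2) atTop (nhds (c⁻¹ • I)) := by
  set L : ℕ → ℝ := fun n =>
    (‖(q n).1 - a‖ + ‖(q n).2 - b‖) * (1 + ‖a‖ + ‖(q n).1‖ + ‖b‖ + ‖(q n).2‖)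
  have hL : Tendsto L atTop (nhds 0) := by
    have hcont : Continuous fun p : EuclideanSpace ℝ (Fin d) × EuclideanSpace ℝ (Fin d) =>
        (‖p.1 - a‖ + ‖p.2 - b‖) * (1 + ‖a‖ + ‖p.1‖ + ‖b‖ + ‖p.2‖) := by fun_prop
    simpa [L, Function.comp_def] using (hcont.tendsto (a, b)).comp hq
  have hv : ∀ n i, |v2 d (ys i) (q n).1 (q n).2 - v2 d (ys i) a b| ≤ L n * (1 + ‖ys i‖) :=
    fun n i => abs_v2_sub_v2_le _ _ _ _ _
  have hL0 : ∀ n, 0 ≤ L n := fun n => by positivity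
  have hnum : Tendsto (fun n : ℕ => (n : ℝ)⁻¹ • ∑ i ∈ range n,
      v2 d (ys i) (q n).1 (q n).2 • ys i) atTop (nhds I) := by
    refine tendsto_avg_of_norm_sub_le (fun n i => ?_) hL hm hI
    rw [← sub_smul, norm_smul, Real.norm_eq_abs]
    calc |v2 d (ys i) (q n).1 (q n).2 - v2 d (ys i) a b| * ‖ys i‖
        ≤ L n * (1 + ‖ys i‖) * (1 + ‖ys i‖) := by
          gcongr
          · exact hv n i
          · linarith
      _ = L n * (1 + ‖ys i‖) ^ 2 := by ring
  have hden : Tendsto (fun n : ℕ => (n : ℝ)⁻¹ • ∑ i ∈ range n,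
      v2 d (ys i) (q n).1 (q n).2) atTop (nhds c) := by
    refine tendsto_avg_of_norm_sub_le (fun n i => ?_) hL hm hc'
    rw [Real.norm_eq_abs]
    refine (hv n i).trans (mul_le_mul_of_nonneg_left ?_ (hL0 n))
    nlinarith [norm_nonneg (ys i)]
  refine ((hden.inv₀ hc).smul hnum).congr' ?_
  filter_upwards [eventually_ne_atTop 0] with n hn
  rw [sampleMStep, smul_smul, smul_eq_mul, mul_inv, inv_inv, mul_right_comm,
    mul_inv_cancel₀ (Nat.cast_ne_zero.2 hn), one_mul]

end mStep

section iterates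
variable {d : ℕ}

variable (d) in
noncomputable def popMStep (μ1s μ2s a b : EuclideanSpace ℝ (Fin d)) :
    EuclideanSpace ℝ (Fin d) :=
  (∫ y, v2 d y a b * mix2 d μ1s μ2s y)⁻¹ • ∫ y, (v2 d y a b * mix2 d μ1s μ2s y) • y

lemma em2_succ (μ1s μ2s μ10 μ20 : EuclideanSpace ℝ (Fin d)) (t : ℕ) :
    em2 d μ1s μ2s μ10 μ20 (t + 1) =
      (popMStep d μ1s μ2s (em2 d μ1s μ2s μ10 μ20 t).1 (em2 d μ1s μ2s μ10 μ20 t).2,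
        popMStep d μ1s μ2s (em2 d μ1s μ2s μ10 μ20 t).2 (em2 d μ1s μ2s μ10 μ20 t).1) := by
  simp only [em2, popMStep, one_sub_v2]

lemma sem2_succ (ys : ℕ → EuclideanSpace ℝ (Fin d)) (n : ℕ) (μ10 μ20 : EuclideanSpace ℝ (Fin d))
    (t : ℕ) :
    sem2 d ys n μ10 μ20 (t + 1) =
      (sampleMStep d ys n (sem2 d ys n μ10 μ20 t).1 (sem2 d ys n μ10 μ20 t).2,
        sampleMStep d ys n (sem2 d ys n μ10 μ20 t).2 (sem2 d ys n μ10 μ20 t).1) := by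
  simp only [sem2, sampleMStep, one_sub_v2]

@[fun_prop]
lemma Measurable.sampleMStep {α : Type*} [MeasurableSpace α]
    {f : α → ℕ → EuclideanSpace ℝ (Fin d)} {g h : α → EuclideanSpace ℝ (Fin d)}
    (hf : Measurable f) (hg : Measurable g) (hh : Measurable h) (n : ℕ) :
    Measurable fun x => sampleMStep d (f x) n (g x) (h x) := by
  unfold _root_.sampleMStep
  fun_prop

lemma measurable_sem2 (n : ℕ) (μ10 μ20 : EuclideanSpace ℝ (Fin d)) (t : ℕ) :
    Measurable fun ys : ℕ → EuclideanSpace ℝ (Fin d) => sem2 d ys n μ10 μ20 t := by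
  induction t with
  | zero =>
    simp only [sem2]
    exact measurable_const
  | succ t ih =>
    simp only [sem2_succ]
    exact (measurable_id.sampleMStep ih.fst ih.snd n).prodMk
      (measurable_id.sampleMStep ih.snd ih.fst n)

end iterates

section consistency
variable {Ω : Type*} [MeasureSpace Ω]

lemma ae_tendsto_avg_of_iIndepFun {E : Type*} [MeasurableSpace E] {ν : Measure E}
    {Y : ℕ → Ω → E} (hmeas : ∀ i, Measurable (Y i)) (hindep : iIndepFun Y ℙ)
    (hlaw : ∀ i, Measure.map (Y i) ℙ = ν)
    {F : Type*} [NormedAddCommGroup F] [NormedSpace ℝ F] [CompleteSpace F] [MeasurableSpace F]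
    [BorelSpace F] [SecondCountableTopology F] {h : E → F} (hh : Measurable h)
    (hint : Integrable h ν) :
    ∀ᵐ ω ∂ℙ, Tendsto (fun n : ℕ => (n : ℝ)⁻¹ • ∑ i ∈ range n, h (Y i ω)) atTop
      (nhds (∫ y, h y ∂ν)) := by
  have hident : ∀ i, IdentDistrib (fun ω => h (Y i ω)) (fun ω => h (Y 0 ω)) ℙ ℙ := fun i =>
    (⟨(hmeas i).aemeasurable, (hmeas 0).aemeasurable, by rw [hlaw i, hlaw 0]⟩ :
      IdentDistrib (Y i) (Y 0) ℙ ℙ).comp hh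
  have hint0 : Integrable (fun ω => h (Y 0 ω)) ℙ := by
    rw [← hlaw 0] at hint
    exact hint.comp_measurable (hmeas 0)
  have hmean : ∫ ω, h (Y 0 ω) ∂ℙ = ∫ y, h y ∂ν := by
    rw [← hlaw 0, integral_map (hmeas 0).aemeasurable hh.aestronglyMeasurable]
  rw [← hmean]
  exact strong_law_ae _ hint0 (fun i j hij => (hindep.indepFun hij).comp hh hh) hident

variable {d : ℕ} (μ1s μ2s : EuclideanSpace ℝ (Fin d))

lemma integral_v2_mul_mix2_pos (a b : EuclideanSpace ℝ (Fin d)) :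
    0 < ∫ y, v2 d y a b * mix2 d μ1s μ2s y := by
  have hpos : ∀ y, 0 < v2 d y a b * mix2 d μ1s μ2s y := fun y =>
    mul_pos (v2_pos y a b) (mix2_pos μ1s μ2s y)
  have hint : Integrable fun y => v2 d y a b * mix2 d μ1s μ2s y := by
    refine ((integrable_mixLaw_iff μ1s μ2s).1 (integrable_mixLaw_of_norm_le μ1s μ2s
      (h := fun y => v2 d y a b) (by fun_prop) fun y => ?_)).congr
      (Eventually.of_forall fun y => mul_comm _ _)
    nlinarith [norm_v2_le_one y a b, norm_nonneg y]
  refine (integral_pos_iff_support_of_nonneg (fun y => (hpos y).le) hint).2 ?_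
  rw [Function.support_eq_univ fun y => (hpos y).ne']
  exact isOpen_univ.measure_pos volume Set.univ_nonempty

lemma ae_tendsto_sampleMStep {Y : ℕ → Ω → EuclideanSpace ℝ (Fin d)}
    (hmeas : ∀ i, Measurable (Y i)) (hindep : iIndepFun Y ℙ)
    (hlaw : ∀ i, Measure.map (Y i) ℙ = mixLaw d μ1s μ2s)
    (p : EuclideanSpace ℝ (Fin d) × EuclideanSpace ℝ (Fin d)) :
    ∀ᵐ ω ∂ℙ, ∀ q : ℕ → EuclideanSpace ℝ (Fin d) × EuclideanSpace ℝ (Fin d),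
      Tendsto q atTop (nhds p) →
      Tendsto (fun n => sampleMStep d (fun i => Y i ω) n (q n).1 (q n).2) atTop
        (nhds (popMStep d μ1s μ2s p.1 p.2)) := by
  obtain ⟨a, b⟩ := p
  have hI := ae_tendsto_avg_of_iIndepFun hmeas hindep hlaw (h := fun y => v2 d y a b • y)
    (by fun_prop) (integrable_mixLaw_of_norm_le μ1s μ2s (by fun_prop) fun y => by
      rw [norm_smul]
      nlinarith [norm_v2_le_one y a b, norm_nonneg y, norm_nonneg (v2 d y a b)])
  have hc := ae_tendsto_avg_of_iIndepFun hmeas hindep hlaw (h := fun y => v2 d y a b)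
    (by fun_prop) (integrable_mixLaw_of_norm_le μ1s μ2s (by fun_prop) fun y => by
      nlinarith [norm_v2_le_one y a b, norm_nonneg y])
  have hm := ae_tendsto_avg_of_iIndepFun hmeas hindep hlaw (h := fun y => (1 + ‖y‖) ^ 2)
    (by fun_prop) (integrable_mixLaw_of_norm_le μ1s μ2s (by fun_prop) fun y => by
      rw [Real.norm_of_nonneg (by positivity)])
  have hnum : ∫ y, v2 d y a b • y ∂mixLaw d μ1s μ2s =
      ∫ y, (v2 d y a b * mix2 d μ1s μ2s y) • y := by
    rw [integral_mixLaw]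
    simp_rw [smul_smul, mul_comm]
  have hden : ∫ y, v2 d y a b ∂mixLaw d μ1s μ2s = ∫ y, v2 d y a b * mix2 d μ1s μ2s y := by
    rw [integral_mixLaw]
    simp_rw [smul_eq_mul, mul_comm]
  filter_upwards [hI, hc, hm] with ω hI hc hm q hq
  rw [hnum] at hI
  rw [hden] at hc
  exact tendsto_sampleMStep _ hq (integral_v2_mul_mix2_pos μ1s μ2s a b).ne' hI hc hm

end consistency

lemma ae_tendsto_sem2 {d : ℕ} (μ1s μ2s μ10 μ20 : EuclideanSpace ℝ (Fin d))
    {Ω : Type*} [MeasureSpace Ω] {Y : ℕ → Ω → EuclideanSpace ℝ (Fin d)}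
    (hmeas : ∀ i, Measurable (Y i)) (hindep : iIndepFun Y ℙ)
    (hlaw : ∀ i, Measure.map (Y i) ℙ = mixLaw d μ1s μ2s) (t : ℕ) :
    ∀ᵐ ω ∂ℙ, Tendsto (fun n => sem2 d (fun i => Y i ω) n μ10 μ20 t) atTop
      (nhds (em2 d μ1s μ2s μ10 μ20 t)) := by
  induction t with
  | zero =>
    simp only [sem2, em2]
    exact Eventually.of_forall fun _ => tendsto_const_nhds
  | succ t ih =>
    set p := em2 d μ1s μ2s μ10 μ20 t
    filter_upwards [ih, ae_tendsto_sampleMStep μ1s μ2s hmeas hindep hlaw p,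
      ae_tendsto_sampleMStep μ1s μ2s hmeas hindep hlaw p.swap] with ω hq h h'
    have hswap := h' _ ((continuous_swap.tendsto p).comp hq)
    simp only [Function.comp_apply, Prod.fst_swap, Prod.snd_swap] at hswap
    rw [funext fun n => sem2_succ _ n μ10 μ20 t, em2_succ]
    exact (h _ hq).prodMk_nhds hswap

lemma tendsto_measure_lt_norm_sub_of_ae_tendsto {Ω E : Type*} [MeasurableSpace Ω]
    {μ : Measure Ω} [IsFiniteMeasure μ] [NormedAddCommGroup E] {f : ℕ → Ω → E} {g : E}
    (hf : ∀ n, AEStronglyMeasurable (f n) μ)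
    (hfg : ∀ᵐ ω ∂μ, Tendsto (fun n => f n ω) atTop (nhds g)) {ε : ℝ} (hε : 0 < ε) :
    Tendsto (fun n => μ {ω | ε < ‖f n ω - g‖}) atTop (nhds 0) :=
  tendsto_of_tendsto_of_tendsto_of_le_of_le tendsto_const_nhds
    (tendstoInMeasure_iff_norm.1 (tendstoInMeasure_of_tendsto_ae hf hfg) ε hε)
    (fun _ => zero_le) fun _ => measure_mono (Set.ofPred_subset_ofPred.2 fun _ => le_of_lt)

theorem stmt7_general (d : ℕ) (μ1s μ2s μ10 μ20 : EuclideanSpace ℝ (Fin d))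
    {Ω : Type*} [MeasureSpace Ω] [IsProbabilityMeasure (ℙ : Measure Ω)]
    (Y : ℕ → Ω → EuclideanSpace ℝ (Fin d))
    (hmeas : ∀ i, Measurable (Y i))
    (hindep : ProbabilityTheory.iIndepFun Y ℙ)
    (hlaw : ∀ i, Measure.map (Y i) ℙ =
      volume.withDensity (fun y => ENNReal.ofReal (mix2 d μ1s μ2s y)))
    (t : ℕ) (ε : ℝ) (hε : 0 < ε) :
    Tendsto (fun n => ℙ {ω | ε < ‖(sem2 d (fun i => Y i ω) n μ10 μ20 t).1 -
        (em2 d μ1s μ2s μ10 μ20 t).1‖}) atTop (nhds 0) ∧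
    Tendsto (fun n => ℙ {ω | ε < ‖(sem2 d (fun i => Y i ω) n μ10 μ20 t).2 -
        (em2 d μ1s μ2s μ10 μ20 t).2‖}) atTop (nhds 0) := by
  have hconv := ae_tendsto_sem2 μ1s μ2s μ10 μ20 hmeas hindep hlaw t
  have hsem : ∀ n, Measurable fun ω => sem2 d (fun i => Y i ω) n μ10 μ20 t := fun n =>
    (measurable_sem2 n μ10 μ20 t).comp (measurable_pi_lambda _ hmeas)
  exact ⟨tendsto_measure_lt_norm_sub_of_ae_tendsto (fun n => (hsem n).fst.aestronglyMeasurable)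
      (hconv.mono fun _ h => h.fst_nhds) hε,
    tendsto_measure_lt_norm_sub_of_ae_tendsto (fun n => (hsem n).snd.aestronglyMeasurable)
      (hconv.mono fun _ h => h.snd_nhds) hε⟩

/-- Theorem 7: for each fixed iteration `t`, the Sample-based EM iterates converge in
probability to the Population EM iterates as `n → ∞`. -/
theorem stmt7 (d : ℕ) (hd : 1 ≤ d) (μ1s μ2s μ10 μ20 : EuclideanSpace ℝ (Fin d))
    {Ω : Type*} [MeasureSpace Ω] [IsProbabilityMeasure (ℙ : Measure Ω)]
    (Y : ℕ → Ω → EuclideanSpace ℝ (Fin d))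
    (hmeas : ∀ i, Measurable (Y i))
    (hindep : ProbabilityTheory.iIndepFun Y ℙ)
    (hlaw : ∀ i, Measure.map (Y i) ℙ =
      volume.withDensity (fun y => ENNReal.ofReal (mix2 d μ1s μ2s y)))
    (t : ℕ) (ε : ℝ) (hε : 0 < ε) :
    Tendsto (fun n => ℙ {ω | ε < ‖(sem2 d (fun i => Y i ω) n μ10 μ20 t).1 -
        (em2 d μ1s μ2s μ10 μ20 t).1‖}) atTop (nhds 0) ∧
    Tendsto (fun n => ℙ {ω | ε < ‖(sem2 d (fun i => Y i ω) n μ10 μ20 t).2 -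
        (em2 d μ1s μ2s μ10 μ20 t).2‖}) atTop (nhds 0) :=
  stmt7_general d μ1s μ2s μ10 μ20 Y hmeas hindep hlaw t ε hε
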